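/- arXiv:2307.14264 — 2 statements merged into one kernel-verified Lean document; each statement's English description precedes it below -/
import Mathlib

section
/- For patterns p, q, r over a finite ground set U, p ⋈ q is consistent with r if and only if p is consistent with q ⋈ r. -/
open Finset
open scoped Classical

namespace PatternST

variable {α : Type*} [DecidableEq α]

/-- `p` is a pattern over ground set `U` with zero element `z`:
a family of subsets of `U ∪ {z}` with exactly one member containing `z`. -/
def IsPattern (z : α) (U : Finset α) (p : Finset (Finset α)) : Prop :=
  (∀ S ∈ p, S ⊆ insert z U) ∧ ∃! S, S ∈ p ∧ z ∈ S

/-- Two sets are linked if one belongs to `p`, the other to `q`, and they intersect. -/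
def linkRel (p q : Finset (Finset α)) (S T : Finset α) : Prop :=
  ((S ∈ p ∧ T ∈ q) ∨ (S ∈ q ∧ T ∈ p)) ∧ (S ∩ T).Nonempty

/-- Reflexive-transitive (and, by symmetry of `linkRel`, symmetric) closure. -/
def conn (p q : Finset (Finset α)) : Finset α → Finset α → Prop :=
  Relation.ReflTransGen (linkRel p q)

/-- The join `p ⋈ q`: unions of the equivalence classes of `conn` on `p ∪ q`. -/
noncomputable def pjoin (p q : Finset (Finset α)) : Finset (Finset α) :=
  (p ∪ q).image fun S => ((p ∪ q).filter fun T => conn p q S T).sup id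

/-- `p` and `q` are consistent if `p ⋈ q` consists of a single set. -/
def consistent (p q : Finset (Finset α)) : Prop := (pjoin p q).card = 1

/-- The labels (elements of `U`, i.e. everything except `z`) occurring in `p`. -/
def lbs (z : α) (p : Finset (Finset α)) : Finset α := (p.sup id).erase z

/-- The labels appearing as singletons in `p`. -/
def sing (z : α) (p : Finset (Finset α)) : Finset α :=
  (lbs z p).filter fun u => ({u} : Finset α) ∈ p

/-- A pattern is complete if every occurring label occurs as a singleton. -/
def Complete (z : α) (p : Finset (Finset α)) : Prop := lbs z p = sing z p

/-!
The join is associative. Both `(p ⋈ q) ⋈ r` and `p ⋈ (q ⋈ r)` consist of the unions of the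
components of the intersection graph on `p ∪ q ∪ r` whose edges join intersecting members of two
different families. For `(p ⋈ q) ⋈ r`, replace each member of `p ∪ q` by its block in `p ⋈ q`:
three-family links become paths in `(p ⋈ q, r)`, and conversely every point reached along such a
path from that block lies in a member of the same three-family component.
-/

section Join

variable {p q r : Finset (Finset α)} {S T : Finset α}

noncomputable def block (p q : Finset (Finset α)) (S : Finset α) : Finset α :=
  ((p ∪ q).filter fun T => conn p q S T).sup id

theorem pjoin_eq_image_block (p q : Finset (Finset α)) : pjoin p q = (p ∪ q).image (block p q) :=
  rfl

theorem mem_block {u : α} : u ∈ block p q S ↔ ∃ T ∈ p ∪ q, conn p q S T ∧ u ∈ T := by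
  simp [block, mem_sup, and_assoc]

theorem subset_block (hS : S ∈ p ∪ q) : S ⊆ block p q S :=
  fun _ hu => mem_block.2 ⟨S, hS, .refl, hu⟩

theorem block_mem_pjoin (hS : S ∈ p ∪ q) : block p q S ∈ pjoin p q :=
  mem_image_of_mem _ hS

theorem linkRel_comm (p q : Finset (Finset α)) : linkRel p q = linkRel q p := by
  ext S T
  simp only [linkRel, or_comm]

instance : Std.Symm (linkRel p q) where
  symm S T h := ⟨by rcases h.1 with h' | h' <;> simp [h'], by rw [inter_comm]; exact h.2⟩

theorem conn_symm (h : conn p q S T) : conn p q T S :=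
  Std.Symm.symm (r := Relation.ReflTransGen (linkRel p q)) _ _ h

theorem block_eq_of_conn (h : conn p q S T) : block p q S = block p q T := by
  unfold block
  congr 1
  exact filter_congr fun X _ => ⟨(conn_symm h).trans, h.trans⟩

theorem eq_or_nonempty_of_conn (h : conn p q S T) : S = T ∨ S.Nonempty := by
  rcases h.cases_head with h | ⟨X, hSX, -⟩
  · exact .inl h
  · exact .inr (hSX.2.mono inter_subset_left)

theorem block_empty : block p q ∅ = ∅ := by
  ext u
  simp only [mem_block, Finset.notMem_empty, iff_false, not_exists, not_and]
  intro T _ h huT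
  rcases eq_or_nonempty_of_conn h with rfl | ⟨_, h⟩
  exacts [Finset.notMem_empty _ huT, Finset.notMem_empty _ h]

theorem exists_mem_block_eq_of_mem_pjoin {X : Finset α} {u : α} (hX : X ∈ pjoin p q)
    (hu : u ∈ X) : ∃ c ∈ p ∪ q, u ∈ c ∧ block p q c = X := by
  obtain ⟨S, -, rfl⟩ := mem_image.1 hX
  obtain ⟨c, hc, hSc, huc⟩ := mem_block.1 hu
  exact ⟨c, hc, huc, (block_eq_of_conn hSc).symm⟩

theorem pjoin_comm (p q : Finset (Finset α)) : pjoin p q = pjoin q p := by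
  unfold pjoin conn
  rw [union_comm, linkRel_comm]

end Join

section TripleJoin

variable {p q r : Finset (Finset α)} {a b c R S : Finset α} {u : α}

def link3 (p q r : Finset (Finset α)) (S T : Finset α) : Prop :=
  linkRel p q S T ∨ linkRel p r S T ∨ linkRel q r S T

def conn3 (p q r : Finset (Finset α)) : Finset α → Finset α → Prop :=
  Relation.ReflTransGen (link3 p q r)

noncomputable def block3 (p q r : Finset (Finset α)) (S : Finset α) : Finset α :=
  ((p ∪ q ∪ r).filter fun T => conn3 p q r S T).sup id

noncomputable def pjoin3 (p q r : Finset (Finset α)) : Finset (Finset α) :=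
  (p ∪ q ∪ r).image (block3 p q r)

theorem mem_block3 : u ∈ block3 p q r S ↔ ∃ T ∈ p ∪ q ∪ r, conn3 p q r S T ∧ u ∈ T := by
  simp [block3, mem_sup, and_assoc]

theorem link3_rotate (p q r : Finset (Finset α)) : link3 q r p = link3 p q r := by
  ext S T
  simp only [link3, linkRel_comm q p, linkRel_comm r p]
  tauto

theorem pjoin3_rotate (p q r : Finset (Finset α)) : pjoin3 q r p = pjoin3 p q r := by
  have hunion : q ∪ r ∪ p = p ∪ q ∪ r := by rw [union_comm, union_assoc]
  unfold pjoin3 block3 conn3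
  rw [hunion, link3_rotate]

theorem link3_symm (h : link3 p q r a b) : link3 p q r b a := by
  rcases h with h | h | h
  exacts [.inl (symm h), .inr (.inl (symm h)), .inr (.inr (symm h))]

theorem link3_of_mem_of_mem (hc : c ∈ p ∪ q) (hR : R ∈ r)
    (huc : u ∈ c) (huR : u ∈ R) : link3 p q r c R := by
  have hcR : (c ∩ R).Nonempty := ⟨u, mem_inter.2 ⟨huc, huR⟩⟩
  rcases mem_union.1 hc with hc | hc
  exacts [.inr (.inl ⟨.inl ⟨hc, hR⟩, hcR⟩), .inr (.inr ⟨.inl ⟨hc, hR⟩, hcR⟩)]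

theorem conn3_of_conn {S T : Finset α} (h : conn p q S T) : conn3 p q r S T :=
  Relation.ReflTransGen.mono (fun _ _ => Or.inl) _ _ h

noncomputable def lift (p q : Finset (Finset α)) (a : Finset α) : Finset α :=
  if a ∈ p ∪ q then block p q a else a

theorem subset_lift : a ⊆ lift p q a := by
  unfold lift
  split_ifs with h
  exacts [subset_block h, subset_rfl]

theorem lift_mem (ha : a ∈ p ∪ q ∪ r) : lift p q a ∈ pjoin p q ∪ r := by
  unfold lift
  split_ifs with h
  · exact mem_union_left _ (block_mem_pjoin h)
  · exact mem_union_right _ ((mem_union.1 ha).resolve_left h)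

theorem conn_lift_self (hR : R ∈ r) : conn (pjoin p q) r R (lift p q R) := by
  unfold lift
  split_ifs with h
  · rcases R.eq_empty_or_nonempty with rfl | ⟨u, hu⟩
    · rw [block_empty]
      exact .refl
    · exact .single ⟨.inr ⟨hR, block_mem_pjoin h⟩, u, mem_inter.2 ⟨hu, subset_block h hu⟩⟩
  · exact .refl

theorem conn_lift_of_mem_of_mem (hc : c ∈ p ∪ q) (hR : R ∈ r) (huc : u ∈ c) (huR : u ∈ R) :
    conn (pjoin p q) r (lift p q c) (lift p q R) := by
  have hlink : linkRel (pjoin p q) r (block p q c) R :=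
    ⟨.inl ⟨block_mem_pjoin hc, hR⟩, u, mem_inter.2 ⟨subset_block hc huc, huR⟩⟩
  rw [lift, if_pos hc]
  exact .head hlink (conn_lift_self hR)

theorem conn_lift_of_link3 (h : link3 p q r a b) :
    conn (pjoin p q) r (lift p q a) (lift p q b) := by
  rcases h with hab | ⟨hab, u, hu⟩ | ⟨hab, u, hu⟩
  · have ha : a ∈ p ∪ q := by rcases hab.1 with ⟨h, -⟩ | ⟨h, -⟩ <;> simp [h]
    have hb : b ∈ p ∪ q := by rcases hab.1 with ⟨-, h⟩ | ⟨-, h⟩ <;> simp [h]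
    rw [lift, lift, if_pos ha, if_pos hb, block_eq_of_conn (.single hab)]
    exact .refl
  all_goals
    obtain ⟨hua, hub⟩ := mem_inter.1 hu
    rcases hab with ⟨ha, hb⟩ | ⟨ha, hb⟩
    · exact conn_lift_of_mem_of_mem (by simp [ha]) hb hua hub
    · exact conn_symm (conn_lift_of_mem_of_mem (by simp [hb]) ha hub hua)

theorem conn_lift_of_conn3 (h : conn3 p q r a b) :
    conn (pjoin p q) r (lift p q a) (lift p q b) :=
  Relation.ReflTransGen.lift' (lift p q) (fun _ _ => conn_lift_of_link3) _ _ h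

/-- The invariant carried along paths of `(p ⋈ q, r)` from `lift p q a`. Its points are covered
by members of `p ∪ q` rather than of `p ∪ q ∪ r`, since only those link to the next `r`-member. -/
def Attached (p q r : Finset (Finset α)) (a Y : Finset α) : Prop :=
  (∀ u ∈ Y, ∃ b ∈ p ∪ q, u ∈ b ∧ conn3 p q r a b) ∨ (Y ∈ r ∧ conn3 p q r a Y)

theorem Attached.subset_block3 {Y : Finset α} (h : Attached p q r a Y) : Y ⊆ block3 p q r a := by
  intro u hu
  rcases h with h | ⟨hY, haY⟩
  · obtain ⟨b, hb, hub, hab⟩ := h u hu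
    exact mem_block3.2 ⟨b, mem_union_left _ hb, hab, hub⟩
  · exact mem_block3.2 ⟨Y, mem_union_right _ hY, haY, hu⟩

theorem attached_block (hac : conn3 p q r a c) :
    Attached p q r a (block p q c) := by
  refine .inl fun v hv => ?_
  obtain ⟨t, ht, hct, hvt⟩ := mem_block.1 hv
  exact ⟨t, ht, hvt, hac.trans (conn3_of_conn hct)⟩

theorem attached_lift (ha : a ∈ p ∪ q ∪ r) : Attached p q r a (lift p q a) := by
  unfold lift
  split_ifs with h
  · exact attached_block .refl
  · exact .inr ⟨(mem_union.1 ha).resolve_left h, .refl⟩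

theorem Attached.conn3_of_mem_of_mem {X : Finset α} (hX : Attached p q r a X) (huX : u ∈ X)
    (hc : c ∈ p ∪ q) (huc : u ∈ c) (hR : R ∈ r) (huR : u ∈ R) : conn3 p q r a c := by
  rcases hX with hX | ⟨hXr, haX⟩
  · obtain ⟨b, hb, hub, hab⟩ := hX u huX
    exact (hab.tail (link3_of_mem_of_mem hb hR hub huR)).tail
      (link3_symm (link3_of_mem_of_mem hc hR huc huR))
  · exact haX.tail (link3_symm (link3_of_mem_of_mem hc hXr huc huX))

theorem Attached.of_linkRel {X Y : Finset α} (hX : Attached p q r a X)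
    (h : linkRel (pjoin p q) r X Y) : Attached p q r a Y := by
  obtain ⟨hXY, u, hu⟩ := h
  obtain ⟨huX, huY⟩ := mem_inter.1 hu
  rcases hXY with ⟨hXP, hYr⟩ | ⟨hXr, hYP⟩
  · obtain ⟨c, hc, huc, -⟩ := exists_mem_block_eq_of_mem_pjoin hXP huX
    exact .inr ⟨hYr, (hX.conn3_of_mem_of_mem huX hc huc hYr huY).tail
      (link3_of_mem_of_mem hc hYr huc huY)⟩
  · obtain ⟨c, hc, huc, rfl⟩ := exists_mem_block_eq_of_mem_pjoin hYP huY
    exact attached_block (hX.conn3_of_mem_of_mem huX hc huc hXr huX)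

theorem Attached.of_conn {X Y : Finset α} (hX : Attached p q r a X)
    (h : conn (pjoin p q) r X Y) : Attached p q r a Y := by
  induction h with
  | refl => exact hX
  | tail _ hlink ih => exact ih.of_linkRel hlink

theorem block_lift (ha : a ∈ p ∪ q ∪ r) :
    block (pjoin p q) r (lift p q a) = block3 p q r a := by
  ext u
  constructor
  · rw [mem_block]
    rintro ⟨Y, -, hY, huY⟩
    exact ((attached_lift ha).of_conn hY).subset_block3 huY
  · rw [mem_block3]
    rintro ⟨b, hb, hab, hub⟩
    exact mem_block.2 ⟨lift p q b, lift_mem hb, conn_lift_of_conn3 hab, subset_lift hub⟩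

theorem exists_block_eq_block_lift {Y : Finset α} (hY : Y ∈ pjoin p q ∪ r) :
    ∃ a ∈ p ∪ q ∪ r, block (pjoin p q) r Y = block (pjoin p q) r (lift p q a) := by
  rcases mem_union.1 hY with hY | hY
  · rw [pjoin_eq_image_block] at hY
    obtain ⟨s, hs, rfl⟩ := mem_image.1 hY
    exact ⟨s, mem_union_left _ hs, by rw [lift, if_pos hs]⟩
  · exact ⟨Y, mem_union_right _ hY, block_eq_of_conn (conn_lift_self hY)⟩

theorem pjoin_pjoin_eq_pjoin3 (p q r : Finset (Finset α)) : pjoin (pjoin p q) r = pjoin3 p q r := by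
  ext X
  rw [pjoin_eq_image_block (pjoin p q) r, pjoin3, mem_image, mem_image]
  constructor
  · rintro ⟨Y, hY, rfl⟩
    obtain ⟨a, ha, hYa⟩ := exists_block_eq_block_lift hY
    exact ⟨a, ha, by rw [hYa, block_lift ha]⟩
  · rintro ⟨a, ha, rfl⟩
    exact ⟨lift p q a, lift_mem ha, block_lift ha⟩

end TripleJoin

theorem pjoin_assoc (p q r : Finset (Finset α)) :
    pjoin (pjoin p q) r = pjoin p (pjoin q r) := by
  rw [pjoin_comm p (pjoin q r), pjoin_pjoin_eq_pjoin3, pjoin_pjoin_eq_pjoin3, pjoin3_rotate p q r]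

theorem join_consistent_other_side_general (p q r : Finset (Finset α)) :
    consistent (pjoin p q) r ↔ consistent p (pjoin q r) := by
  rw [consistent, consistent, pjoin_assoc]

/-- `p ⋈ q ∼ r` iff `p ∼ q ⋈ r`. -/
theorem join_consistent_other_side (z : α) (U : Finset α) (p q r : Finset (Finset α))
    (hp : IsPattern z U p) (hq : IsPattern z U q) (hr : IsPattern z U r) :
    consistent (pjoin p q) r ↔ consistent p (pjoin q r) :=
  join_consistent_other_side_general p q r

end PatternST
end

section
/- For each pattern p, there exists a family R_p of complete patterns of size at most 2^{|lbs(p)\sing(p)|} that represents p: for every pattern q, p ∼ q if and only if some r ∈ R_p satisfies r ∼ q. -/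
open Finset
open scoped Classical

namespace PatternST

variable {α : Type*} [DecidableEq α]

/-!
Consistency of `p` and `q` is connectivity of the bipartite intersection graph between the
sets of `p` and those of `q`. Let `i` be a label of `p` that is not a singleton of `p`. Adding
`{i}` to `p`, or erasing `i` from the sets of `p`, can only lose connectivity: the new singleton
is absorbed by a set of `p` containing `i`, and erased sets only lose intersections. Conversely,
if some set of `q` contains `i`, that set absorbs the new singleton, and if none does, erasing
`i` removes no intersection with `q`. So `p ∼ q` iff `fix_i p ∼ q` or `forget_i p ∼ q`; both
have one non-singleton label fewer, and induction gives a representation of size at most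
`2 ^ |lbs(p) \ sing(p)|`.
-/

def fixLabel (i : α) (p : Finset (Finset α)) : Finset (Finset α) := insert {i} p

def forgetLabel (i : α) (p : Finset (Finset α)) : Finset (Finset α) := p.image (·.erase i)

def AllConn (p q : Finset (Finset α)) : Prop :=
  ∀ S ∈ p ∪ q, ∀ T ∈ p ∪ q, conn p q S T

def Represents (z : α) (U : Finset α) (p : Finset (Finset α))
    (R : Finset (Finset (Finset α))) : Prop :=
  ∀ q, IsPattern z U q → (consistent p q ↔ ∃ r ∈ R, consistent r q)

section Connectivity

variable {p q : Finset (Finset α)} {A B C : Finset α} {x : α}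

theorem linkRel_symm (h : linkRel p q A B) : linkRel p q B A :=
  ⟨h.1.symm.imp And.symm And.symm, by rw [inter_comm]; exact h.2⟩

theorem linkRel.mem_union (h : linkRel p q A B) : A ∈ p ∪ q := by
  rcases h.1 with h | h <;> simp [h.1]

theorem conn_refl : conn p q A A := Relation.ReflTransGen.refl

theorem conn.trans (h₁ : conn p q A B) (h₂ : conn p q B C) : conn p q A C :=
  Relation.ReflTransGen.trans h₁ h₂

theorem conn.symm (h : conn p q A B) : conn p q B A := by
  induction h with
  | refl => exact conn_refl
  | tail _ hBC ih => exact (Relation.ReflTransGen.single (linkRel_symm hBC)).trans ih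

theorem conn_of_mem_of_mem (hA : A ∈ p) (hB : B ∈ q) (hxA : x ∈ A) (hxB : x ∈ B) :
    conn p q A B :=
  .single ⟨.inl ⟨hA, hB⟩, x, mem_inter.2 ⟨hxA, hxB⟩⟩

/-- `C` meets whichever of `A`, `B` lies on the other side. -/
theorem conn_of_linkRel_of_mem (hAB : linkRel p q A B) (hxA : x ∈ A) (hxB : x ∈ B)
    (hC : C ∈ p ∪ q) (hxC : x ∈ C) : conn p q A C := by
  rcases hAB.1 with ⟨hA, hB⟩ | ⟨hA, hB⟩ <;> rcases mem_union.1 hC with hC | hC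
  · exact (conn_of_mem_of_mem hA hB hxA hxB).trans (conn_of_mem_of_mem hC hB hxC hxB).symm
  · exact conn_of_mem_of_mem hA hC hxA hxC
  · exact (conn_of_mem_of_mem hC hA hxC hxA).symm
  · exact (conn_of_mem_of_mem hB hA hxB hxA).symm.trans (conn_of_mem_of_mem hB hC hxB hxC)

theorem conn.eq_of_isolated (hA : ∀ B, ¬linkRel p q A B) (h : conn p q A B) : B = A := by
  rcases Relation.ReflTransGen.cases_head h with h | ⟨C, hAC, -⟩
  · exact h.symm
  · exact absurd hAC (hA C)

theorem conn.mono_left {p' : Finset (Finset α)} (hp : p ⊆ p') (h : conn p q A B) :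
    conn p' q A B :=
  Relation.ReflTransGen.mono (fun _ _ ⟨hside, hne⟩ =>
    ⟨hside.imp (And.imp_left (@hp _)) (And.imp_right (@hp _)), hne⟩) _ _ h

end Connectivity

section Join

variable {p q : Finset (Finset α)} {S T : Finset α}

noncomputable def classUnion (p q : Finset (Finset α)) (S : Finset α) : Finset α :=
  ((p ∪ q).filter fun T => conn p q S T).sup id

theorem classUnion_of_isolated (hS : S ∈ p ∪ q) (hiso : ∀ B, ¬linkRel p q S B) :
    classUnion p q S = S := by
  have : (p ∪ q).filter (fun T => conn p q S T) = {S} := by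
    ext T
    simp only [mem_filter, mem_singleton]
    exact ⟨fun h => h.2.eq_of_isolated hiso, by rintro rfl; exact ⟨hS, conn_refl⟩⟩
  rw [classUnion, this, sup_singleton, id]

/-- A common point of a link `S B` with a set of the class of `T` joins `S` to that class. -/
theorem conn_of_classUnion_eq_of_linkRel (hST : classUnion p q S = classUnion p q T)
    (hSB : linkRel p q S B) : conn p q S T := by
  obtain ⟨x, hx⟩ := hSB.2
  rw [mem_inter] at hx
  have hxT : x ∈ classUnion p q T :=
    hST ▸ mem_sup.2 ⟨S, mem_filter.2 ⟨hSB.mem_union, conn_refl⟩, hx.1⟩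
  obtain ⟨C, hC, hxC⟩ := mem_sup.1 hxT
  rw [mem_filter] at hC
  exact (conn_of_linkRel_of_mem hSB hx.1 hx.2 hC.1 hxC).trans hC.2.symm

theorem conn_of_classUnion_eq (hS : S ∈ p ∪ q) (hT : T ∈ p ∪ q)
    (hST : classUnion p q S = classUnion p q T) : conn p q S T := by
  by_cases hS' : ∃ B, linkRel p q S B
  · obtain ⟨B, hSB⟩ := hS'
    exact conn_of_classUnion_eq_of_linkRel hST hSB
  by_cases hT' : ∃ B, linkRel p q T B
  · obtain ⟨B, hTB⟩ := hT'
    exact (conn_of_classUnion_eq_of_linkRel hST.symm hTB).symm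
  push Not at hS' hT'
  rw [classUnion_of_isolated hS hS', classUnion_of_isolated hT hT'] at hST
  exact hST ▸ conn_refl

theorem consistent_iff_allConn (hne : (p ∪ q).Nonempty) : consistent p q ↔ AllConn p q := by
  have hjoin : pjoin p q = (p ∪ q).image (classUnion p q) := rfl
  constructor
  · intro h S hS T hT
    obtain ⟨W, hW⟩ := card_eq_one.1 h
    have hmem : ∀ X ∈ p ∪ q, classUnion p q X = W := fun X hX =>
      mem_singleton.1 (hW ▸ hjoin ▸ mem_image_of_mem _ hX)
    exact conn_of_classUnion_eq hS hT ((hmem S hS).trans (hmem T hT).symm)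
  · intro h
    have hconst : ∀ S ∈ p ∪ q, classUnion p q S = (p ∪ q).sup id := fun S hS => by
      rw [classUnion, filter_true_of_mem (h S hS)]
    rw [consistent, hjoin, image_congr hconst, image_const hne, card_singleton]

end Join

section Transfer

variable {p q p' q' : Finset (Finset α)}

theorem allConn_of_forall_conn {T : Finset α} (h : ∀ S ∈ p ∪ q, conn p q S T) :
    AllConn p q :=
  fun S hS T' hT' => (h S hS).trans (h T' hT').symm

theorem AllConn.of_map (f : Finset α → Finset α)
    (hlink : ∀ A ∈ p', ∀ B ∈ q', (A ∩ B).Nonempty → conn p q (f A) (f B))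
    (hcover : ∀ S ∈ p ∪ q, ∃ A ∈ p' ∪ q', conn p q S (f A)) (H : AllConn p' q') :
    AllConn p q := by
  have hmap : ∀ {A B}, conn p' q' A B → conn p q (f A) (f B) :=
    Relation.ReflTransGen.lift' f (fun A B hAB => hAB.1.elim
      (fun h => hlink A h.1 B h.2 hAB.2)
      (fun h => (hlink B h.2 A h.1 (by rw [inter_comm]; exact hAB.2)).symm)) _ _
  intro S hS T hT
  obtain ⟨A, hA, hSA⟩ := hcover S hS
  obtain ⟨B, hB, hTB⟩ := hcover T hT
  exact hSA.trans ((hmap (H A hA B hB)).trans hTB.symm)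

theorem AllConn.of_simulation (R : Finset α → Finset α → Prop) {T : Finset α}
    (hT : T ∈ p' ∪ q')
    (hstep : ∀ a b A, linkRel p' q' a b → R A a → ∃ B, R B b ∧ conn p q A B)
    (hbase : ∀ A, R A T → conn p q A T)
    (hcover : ∀ S ∈ p ∪ q, ∃ a ∈ p' ∪ q', R S a) (H : AllConn p' q') : AllConn p q := by
  have hlift : ∀ a, conn p' q' a T → ∀ A, R A a → conn p q A T := by
    intro a h
    induction h using Relation.ReflTransGen.head_induction_on with
    | refl => exact hbase
    | head hab _ ih =>
      intro A hA
      obtain ⟨B, hB, hAB⟩ := hstep _ _ _ hab hA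
      exact hAB.trans (ih B hB)
  refine allConn_of_forall_conn (T := T) fun S hS => ?_
  obtain ⟨a, ha, hSa⟩ := hcover S hS
  exact hlift a (H a ha T hT) S hSa

end Transfer

section FixForget

variable {p q : Finset (Finset α)} {i : α}

theorem allConn_fixLabel {T : Finset α} (hT : T ∈ q) (hiT : i ∈ T) (H : AllConn p q) :
    AllConn (fixLabel i p) q := by
  refine H.of_map id (fun A hA B hB ⟨x, hx⟩ => ?_) (fun S hS => ?_)
  · rw [mem_inter] at hx
    exact (conn_of_mem_of_mem hA hB hx.1 hx.2).mono_left (subset_insert _ _)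
  · rcases mem_union.1 hS with hS | hS
    · rcases mem_insert.1 hS with rfl | hS
      · exact ⟨T, mem_union_right _ hT,
          conn_of_mem_of_mem (mem_insert_self _ _) hT (mem_singleton_self i) hiT⟩
      · exact ⟨S, mem_union_left _ hS, conn_refl⟩
    · exact ⟨S, mem_union_right _ hS, conn_refl⟩

theorem allConn_forgetLabel (hq : ∀ T ∈ q, i ∉ T) (H : AllConn p q) :
    AllConn (forgetLabel i p) q := by
  have herase : ∀ B ∈ q, B.erase i = B := fun B hB => erase_eq_of_notMem (hq B hB)
  refine H.of_map (·.erase i) (fun A hA B hB ⟨x, hx⟩ => ?_) (fun S hS => ?_)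
  · rw [mem_inter] at hx
    rw [herase B hB]
    exact conn_of_mem_of_mem (mem_image_of_mem _ hA) hB
      (mem_erase.2 ⟨fun h => hq B hB (h ▸ hx.2), hx.1⟩) hx.2
  · rcases mem_union.1 hS with hS | hS
    · obtain ⟨A, hA, rfl⟩ := mem_image.1 hS
      exact ⟨A, mem_union_left _ hA, conn_refl⟩
    · exact ⟨S, mem_union_right _ hS, by rw [herase S hS]; exact conn_refl⟩

theorem AllConn.of_fixLabel {S : Finset α} (hS : S ∈ p) (hiS : i ∈ S) (hip : {i} ∉ p)
    (H : AllConn (fixLabel i p) q) : AllConn p q := by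
  set f : Finset α → Finset α := fun X => if X = {i} then S else X
  refine H.of_map f (fun A hA B hB ⟨x, hx⟩ => ?_) (fun X hX => ⟨X, ?_⟩)
  · rw [mem_inter] at hx
    by_cases hAi : A = {i}
    · have hiB : i ∈ B := by rw [hAi, mem_singleton] at hx; exact hx.1 ▸ hx.2
      by_cases hBi : B = {i}
      · simp only [f, hAi, hBi]
        exact conn_refl
      · simp only [f, hAi, hBi, if_true, if_false]
        exact conn_of_mem_of_mem hS hB hiS hiB
    · have hA : A ∈ p := (mem_insert.1 hA).resolve_left hAi
      by_cases hBi : B = {i}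
      · subst hBi
        simp only [f, hAi, if_true, if_false]
        rw [mem_singleton.1 hx.2] at hx
        exact (conn_of_mem_of_mem hA hB hx.1 hx.2).trans
          (conn_of_mem_of_mem hS hB hiS hx.2).symm
      · simp only [f, hAi, hBi, if_false]
        exact conn_of_mem_of_mem hA hB hx.1 hx.2
  · refine ⟨union_subset_union_left (subset_insert _ _) hX, ?_⟩
    by_cases hXi : X = {i}
    · subst hXi
      have hXq : {i} ∈ q := (mem_union.1 hX).resolve_left hip
      simp only [f, if_true]
      exact (conn_of_mem_of_mem hS hXq hiS (mem_singleton_self i)).symm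
    · simp only [f, hXi, if_false]
      exact conn_refl

theorem AllConn.of_forgetLabel {T : Finset α} (hT : T ∈ q) (hTne : T.Nonempty)
    (H : AllConn (forgetLabel i p) q) : AllConn p q := by
  refine H.of_simulation (fun A a => (A ∈ p ∧ A.erase i = a) ∨ (A ∈ q ∧ A = a))
    (mem_union_right _ hT) ?_ ?_ ?_
  · rintro a b A ⟨⟨ha, hb⟩ | ⟨ha, hb⟩, x, hx⟩ hA <;> rw [mem_inter] at hx
    · refine ⟨b, .inr ⟨hb, rfl⟩, ?_⟩
      rcases hA with ⟨hA, rfl⟩ | ⟨hA, rfl⟩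
      · exact conn_of_mem_of_mem hA hb (mem_of_mem_erase hx.1) hx.2
      · obtain ⟨A', hA', rfl⟩ := mem_image.1 ha
        have hxA' := mem_of_mem_erase hx.1
        exact (conn_of_mem_of_mem hA' hA hxA' hx.1).symm.trans
          (conn_of_mem_of_mem hA' hb hxA' hx.2)
    · obtain ⟨B, hB, rfl⟩ := mem_image.1 hb
      have hxB := mem_of_mem_erase hx.2
      refine ⟨B, .inl ⟨hB, rfl⟩, ?_⟩
      rcases hA with ⟨hA, rfl⟩ | ⟨hA, rfl⟩
      · exact (conn_of_mem_of_mem hA ha (mem_of_mem_erase hx.1) hx.1).trans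
          (conn_of_mem_of_mem hB ha hxB hx.1).symm
      · exact (conn_of_mem_of_mem hB hA hxB hx.1).symm
  · rintro A (⟨hA, rfl⟩ | ⟨-, rfl⟩)
    · obtain ⟨y, hy⟩ := hTne
      exact conn_of_mem_of_mem hA hT (mem_of_mem_erase hy) hy
    · exact conn_refl
  · intro S hS
    rcases mem_union.1 hS with hS | hS
    · exact ⟨S.erase i, mem_union_left _ (mem_image_of_mem _ hS), .inl ⟨hS, rfl⟩⟩
    · exact ⟨S, mem_union_right _ hS, .inr ⟨hS, rfl⟩⟩

theorem allConn_iff_fixLabel_or_forgetLabel {S T : Finset α} (hS : S ∈ p) (hiS : i ∈ S)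
    (hip : {i} ∉ p) (hT : T ∈ q) (hTne : T.Nonempty) :
    AllConn p q ↔ AllConn (fixLabel i p) q ∨ AllConn (forgetLabel i p) q := by
  refine ⟨fun H => ?_, fun H => H.elim (·.of_fixLabel hS hiS hip) (·.of_forgetLabel hT hTne)⟩
  by_cases hqi : ∃ T ∈ q, i ∈ T
  · obtain ⟨T', hT', hiT'⟩ := hqi
    exact .inl (allConn_fixLabel hT' hiT' H)
  · push Not at hqi
    exact .inr (allConn_forgetLabel hqi H)

end FixForget

section Labels

variable {z i : α} {U : Finset α} {p : Finset (Finset α)}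

theorem mem_lbs : i ∈ lbs z p ↔ i ≠ z ∧ ∃ S ∈ p, i ∈ S := by
  simp [lbs, mem_sup]

theorem mem_sing : i ∈ sing z p ↔ i ∈ lbs z p ∧ {i} ∈ p := mem_filter

theorem IsPattern.lbs_subset (hp : IsPattern z U p) : lbs z p ⊆ U := by
  intro u hu
  obtain ⟨huz, S, hS, huS⟩ := mem_lbs.1 hu
  exact (mem_insert.1 (hp.1 S hS huS)).resolve_left huz

theorem isPattern_fixLabel (hp : IsPattern z U p) (hi : i ∈ lbs z p) :
    IsPattern z U (fixLabel i p) := by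
  have hiU := hp.lbs_subset hi
  obtain ⟨hsub, S, ⟨hS, hzS⟩, huniq⟩ := hp
  refine ⟨fun T hT => ?_, S, ⟨mem_insert_of_mem hS, hzS⟩, fun T ⟨hT, hzT⟩ => ?_⟩
  · rcases mem_insert.1 hT with rfl | hT
    · exact singleton_subset_iff.2 (mem_insert_of_mem hiU)
    · exact hsub T hT
  · rcases mem_insert.1 hT with rfl | hT
    · exact absurd (mem_singleton.1 hzT).symm (mem_lbs.1 hi).1
    · exact huniq T ⟨hT, hzT⟩

theorem isPattern_forgetLabel (hp : IsPattern z U p) (hiz : i ≠ z) :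
    IsPattern z U (forgetLabel i p) := by
  obtain ⟨hsub, S, ⟨hS, hzS⟩, huniq⟩ := hp
  refine ⟨fun T hT => ?_, S.erase i,
    ⟨mem_image_of_mem _ hS, mem_erase.2 ⟨hiz.symm, hzS⟩⟩, ?_⟩
  · obtain ⟨A, hA, rfl⟩ := mem_image.1 hT
    exact (erase_subset _ _).trans (hsub A hA)
  · rintro T ⟨hT, hzT⟩
    obtain ⟨A, hA, rfl⟩ := mem_image.1 hT
    rw [huniq A ⟨hA, mem_of_mem_erase hzT⟩]

theorem lbs_sdiff_sing_fixLabel (hi : i ∈ lbs z p) :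
    lbs z (fixLabel i p) \ sing z (fixLabel i p) = (lbs z p \ sing z p).erase i := by
  have hlbs : lbs z (fixLabel i p) = lbs z p := by
    ext u
    simp only [mem_lbs, PatternST.fixLabel, mem_insert, exists_eq_or_imp, mem_singleton]
    constructor
    · rintro ⟨huz, rfl | h⟩
      · exact mem_lbs.1 hi
      · exact ⟨huz, h⟩
    · exact fun ⟨huz, h⟩ => ⟨huz, .inr h⟩
  have hsing : sing z (fixLabel i p) = insert i (sing z p) := by
    ext u
    rw [mem_sing, hlbs, mem_insert, mem_sing, PatternST.fixLabel, mem_insert, singleton_inj]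
    constructor
    · rintro ⟨hu, rfl | h⟩
      exacts [.inl rfl, .inr ⟨hu, h⟩]
    · rintro (rfl | h)
      exacts [⟨hi, .inl rfl⟩, ⟨h.1, .inr h.2⟩]
  rw [hlbs, hsing, sdiff_insert]

theorem lbs_sdiff_sing_forgetLabel_subset :
    lbs z (forgetLabel i p) \ sing z (forgetLabel i p) ⊆ (lbs z p \ sing z p).erase i := by
  have hlbs : lbs z (forgetLabel i p) = (lbs z p).erase i := by
    ext u
    simp only [mem_lbs, PatternST.forgetLabel, mem_image, mem_erase, exists_exists_and_eq_and]
    tauto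
  intro u hu
  simp only [mem_sdiff, mem_sing, hlbs, mem_erase] at hu ⊢
  refine ⟨hu.1.1, hu.1.2, fun h => hu.2 ⟨hu.1, ?_⟩⟩
  exact mem_image.2 ⟨{u}, h.2, erase_eq_of_notMem (by simpa using hu.1.1.symm)⟩

theorem represents_union (hi : i ∈ lbs z p \ sing z p) {R₁ R₂ : Finset (Finset (Finset α))}
    (h₁ : Represents z U (fixLabel i p) R₁) (h₂ : Represents z U (forgetLabel i p) R₂) :
    Represents z U p (R₁ ∪ R₂) := by
  intro q hq
  obtain ⟨T, ⟨hT, hzT⟩, -⟩ := hq.2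
  obtain ⟨hil, hip⟩ := mem_sdiff.1 hi
  obtain ⟨-, S, hS, hiS⟩ := mem_lbs.1 hil
  have hne : ∀ p' : Finset (Finset α), (p' ∪ q).Nonempty :=
    fun _ => ⟨T, mem_union_right _ hT⟩
  rw [consistent_iff_allConn (hne _), allConn_iff_fixLabel_or_forgetLabel hS hiS
    (fun h => hip (mem_sing.2 ⟨hil, h⟩)) hT ⟨z, hzT⟩, ← consistent_iff_allConn (hne _),
    ← consistent_iff_allConn (hne _), h₁ q hq, h₂ q hq]
  simp only [mem_union, or_and_right, exists_or]

end Labels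

theorem two_pow_card_add_two_pow_card_le {s t₁ t₂ : Finset α} {i : α} (hi : i ∈ s)
    (h₁ : t₁ ⊆ s.erase i) (h₂ : t₂ ⊆ s.erase i) : 2 ^ #t₁ + 2 ^ #t₂ ≤ 2 ^ #s := by
  calc 2 ^ #t₁ + 2 ^ #t₂ ≤ 2 ^ #(s.erase i) + 2 ^ #(s.erase i) :=
        add_le_add (pow_le_pow_right₀ one_le_two (card_le_card h₁))
          (pow_le_pow_right₀ one_le_two (card_le_card h₂))
    _ = 2 ^ #s := by rw [← card_erase_add_one hi, pow_succ]; ring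

/-- Every pattern has a complete representation of size at most
`2 ^ |lbs(p) \ sing(p)|` consisting of complete patterns. -/
theorem complete_representation_exists (z : α) (U : Finset α)
    (p : Finset (Finset α)) (hp : IsPattern z U p) :
    ∃ R : Finset (Finset (Finset α)),
      R.card ≤ 2 ^ (lbs z p \ sing z p).card ∧
      (∀ r ∈ R, IsPattern z U r ∧ Complete z r) ∧
      (∀ q : Finset (Finset α), IsPattern z U q →
        (consistent p q ↔ ∃ r ∈ R, consistent r q)) := by
  induction hn : (lbs z p \ sing z p).card using Nat.strong_induction_on generalizing p with
  | _ n ih =>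
  obtain hD | ⟨i, hi⟩ := (lbs z p \ sing z p).eq_empty_or_nonempty
  · have hcomplete : Complete z p :=
      Subset.antisymm (sdiff_eq_empty_iff_subset.1 hD) (filter_subset _ _)
    exact ⟨{p}, by simpa using Nat.one_le_two_pow, by simpa using ⟨hp, hcomplete⟩,
      fun q _ => by simp⟩
  have hil := (mem_sdiff.1 hi).1
  have hfix := (lbs_sdiff_sing_fixLabel hil).subset
  have hforget := lbs_sdiff_sing_forgetLabel_subset (z := z) (p := p) (i := i)
  have hlt : ∀ {t}, t ⊆ (lbs z p \ sing z p).erase i → #t < n := fun h =>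
    hn ▸ (card_le_card h).trans_lt (card_erase_lt_of_mem hi)
  obtain ⟨R₁, hcard₁, hR₁, hrep₁⟩ := ih _ (hlt hfix) _ (isPattern_fixLabel hp hil) rfl
  obtain ⟨R₂, hcard₂, hR₂, hrep₂⟩ :=
    ih _ (hlt hforget) _ (isPattern_forgetLabel hp (mem_lbs.1 hil).1) rfl
  refine ⟨R₁ ∪ R₂, ?_, fun r hr => (mem_union.1 hr).elim (hR₁ r) (hR₂ r),
    represents_union hi hrep₁ hrep₂⟩
  calc #(R₁ ∪ R₂) ≤ #R₁ + #R₂ := card_union_le _ _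
    _ ≤ _ := add_le_add hcard₁ hcard₂
    _ ≤ 2 ^ n := hn ▸ two_pow_card_add_two_pow_card_le hi hfix hforget

end PatternST
end
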